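/- Let G = (V,E) be a finite simple graph and p : V → ℝ² a map in general position. Suppose that deleting any single edge of G does not increase the number of connected components, but deleting some two distinct edges e and f increases the number of connected components by 1. Then deleting these two edges does not affect the number of stress: s_p(E \ {e,f}) = s_p(E). -/

import Mathlib

noncomputable section

open Classical in
/-- The edge vector of the pair `(i, j)` under the realization `p`: the function `V → ℝ × ℝ`
whose value is `p i - p j` at `i`, `p j - p i` at `j`, and `0` elsewhere. -/
def edgeVec {V : Type*} (p : V → ℝ × ℝ) (i j : V) : V → ℝ × ℝ :=
  fun v => if v = i then p i - p j else if v = j then p j - p i else 0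

/-- The set of edge vectors of a set `F` of (potential) edges under the realization `p`. -/
def edgeVecs {V : Type*} (p : V → ℝ × ℝ) (F : Set (Sym2 V)) : Set (V → ℝ × ℝ) :=
  {x | ∃ i j, s(i, j) ∈ F ∧ x = edgeVec p i j}

/-- The rank of the edge vectors of `F` under the realization `p`. -/
def rankOf {V : Type*} (p : V → ℝ × ℝ) (F : Set (Sym2 V)) : ℕ :=
  Module.finrank ℝ (Submodule.span ℝ (edgeVecs p F))

/-- The generic rank of a set of edges: the maximum over all realizations `p` of the rank. -/
def genRankSet {V : Type*} (F : Set (Sym2 V)) : ℕ :=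
  ⨆ p : V → ℝ × ℝ, rankOf p F

/-- The generic rank `r(G)` of a graph. -/
def genRank {V : Type*} (G : SimpleGraph V) : ℕ := genRankSet G.edgeSet

/-- The stress number `s_p(F)` of a set of edges under the realization `p`
(the dimension of the space of resolvable stresses). -/
def stressNum {V : Type*} (p : V → ℝ × ℝ) (F : Set (Sym2 V)) : ℕ :=
  F.ncard - rankOf p F

/-- The generic stress number `s(F)` of a set of edges. -/
def genStressSet {V : Type*} (F : Set (Sym2 V)) : ℕ := F.ncard - genRankSet F

/-- The generic stress number `s(G)` of a graph. -/
def genStress {V : Type*} (G : SimpleGraph V) : ℕ := G.edgeSet.ncard - genRank G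

/-- A planar configuration is in general position if it is injective and no three distinct
vertices have collinear images. -/
def GeneralPosition {V : Type*} (p : V → ℝ × ℝ) : Prop :=
  Function.Injective p ∧
    ∀ i j k : V, i ≠ j → j ≠ k → i ≠ k →
      ¬ Collinear ℝ ({p i, p j, p k} : Set (ℝ × ℝ))

/-- `W_U`: the subspace of functions `V → ℝ × ℝ` vanishing at every vertex outside `U`. -/
def vanishOn {V : Type*} (U : Set V) : Submodule ℝ (V → ℝ × ℝ) where
  carrier := {f | ∀ v ∉ U, f v = 0}
  zero_mem' := fun v _ => rfl
  add_mem' := by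
    intro a b ha hb v hv
    simp [Pi.add_apply, ha v hv, hb v hv]
  smul_mem' := by
    intro c f hf v hv
    simp [Pi.smul_apply, hf v hv]

end


/-!
Let `H = G - e - f`. Since neither `e` nor `f` alone is a bridge of `G` but together they cut
`G`, each is a bridge of the graph without the other; so the component `U` of an endpoint `a` of
`e = ab` in `H` contains exactly one endpoint of `f`. The linear map sending `g : V → ℝ²` to its
total momentum and angular momentum over `U`, `(∑_{v ∈ U} g v, ∑_{v ∈ U} p v × g v)`, kills every
edge vector of `H` and sends the edge vectors of `e` and `f` to the Plücker coordinates of their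
lines, which are independent in general position. Hence restoring `e` and `f` raises the rank by
exactly two, as much as it raises the number of edges.
-/

namespace SimpleGraph

variable {V : Type*} {K : SimpleGraph V} {x y u v : V}

theorem Reachable.deleteEdges_of_not_isBridge (hxy : ¬ K.IsBridge s(x, y))
    (h : K.Reachable u v) : (K.deleteEdges {s(x, y)}).Reachable u v := by
  rw [isBridge_iff, not_not] at hxy
  obtain ⟨w⟩ := h
  induction w with
  | nil => rfl
  | @cons u m v hum _ ih =>
    by_cases he : s(u, m) = s(x, y)
    · rcases Sym2.eq_iff.mp he with ⟨rfl, rfl⟩ | ⟨rfl, rfl⟩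
      exacts [hxy.trans ih, hxy.symm.trans ih]
    · exact (deleteEdges_adj.mpr ⟨hum, he⟩).reachable.trans ih

theorem card_connectedComponent_deleteEdges_eq_iff [Finite V] (hxy : K.Adj x y) :
    Nat.card (K.deleteEdges {s(x, y)}).ConnectedComponent = Nat.card K.ConnectedComponent ↔
      ¬ K.IsBridge s(x, y) := by
  set π := ConnectedComponent.map (Hom.ofLE (K.deleteEdges_le {s(x, y)}))
  have hπ := ConnectedComponent.surjective_map_ofLE (K.deleteEdges_le {s(x, y)})
  rw [← (Nat.bijective_iff_surjective_and_card π).trans (and_iff_right hπ), isBridge_iff, not_not]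
  constructor
  · intro hbij
    exact ConnectedComponent.eq.mp <| hbij.1 <| ConnectedComponent.eq.mpr hxy.reachable
  · intro hxy'
    refine ⟨ConnectedComponent.ind₂ fun u v huv => ?_, hπ⟩
    exact ConnectedComponent.eq.mpr <| (ConnectedComponent.eq.mp huv).deleteEdges_of_not_isBridge
      (by rwa [isBridge_iff, not_not])

theorem Reachable.deleteEdges_or_reachable_endpoints (h : K.Reachable u v) :
    (K.deleteEdges {s(x, y)}).Reachable u v ∨
      ((K.deleteEdges {s(x, y)}).Reachable u x ∨ (K.deleteEdges {s(x, y)}).Reachable u y) ∧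
      ((K.deleteEdges {s(x, y)}).Reachable v x ∨ (K.deleteEdges {s(x, y)}).Reachable v y) := by
  obtain ⟨w⟩ := h
  induction w with
  | nil => exact .inl .rfl
  | @cons u m v hum _ ih =>
    by_cases he : s(u, m) = s(x, y)
    · right
      rcases Sym2.eq_iff.mp he with ⟨rfl, rfl⟩ | ⟨rfl, rfl⟩
      · exact ⟨.inl .rfl, ih.elim (fun h => .inr h.symm) And.right⟩
      · exact ⟨.inr .rfl, ih.elim (fun h => .inl h.symm) And.right⟩
    · have hum : (K.deleteEdges {s(x, y)}).Reachable u m :=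
        (deleteEdges_adj.mpr ⟨hum, he⟩).reachable
      exact ih.imp hum.trans (And.imp_left (Or.imp hum.trans hum.trans))

theorem Reachable.xor_reachable_deleteEdges (h : K.Reachable u v) (hxy : K.IsBridge s(x, y))
    (huv : ¬ (K.deleteEdges {s(x, y)}).Reachable u v) :
    Xor ((K.deleteEdges {s(x, y)}).Reachable x u) ((K.deleteEdges {s(x, y)}).Reachable x v) := by
  rw [isBridge_iff] at hxy
  rcases h.deleteEdges_or_reachable_endpoints (x := x) (y := y) with h | ⟨hu | hu, hv | hv⟩
  · exact absurd h huv
  · exact absurd (hu.trans hv.symm) huv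
  · exact .inl ⟨hu.symm, fun hxv => hxy (hxv.trans hv)⟩
  · exact .inr ⟨hv.symm, fun hxu => hxy (hxu.trans hu)⟩
  · exact absurd (hu.trans hv.symm) huv

theorem deleteEdges_singleton_deleteEdges_singleton (G : SimpleGraph V) (e f : Sym2 V) :
    (G.deleteEdges {f}).deleteEdges {e} = G.deleteEdges {e, f} := by
  rw [deleteEdges_deleteEdges, Set.singleton_union, Set.pair_comm]

theorem isBridge_deleteEdges_of_card [Finite V] {G : SimpleGraph V} {a b : V} {f : Sym2 V}
    (hab : G.Adj a b) (hne : s(a, b) ≠ f)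
    (hf : Nat.card (G.deleteEdges {f}).ConnectedComponent = Nat.card G.ConnectedComponent)
    (hef : Nat.card (G.deleteEdges {s(a, b), f}).ConnectedComponent ≠
      Nat.card G.ConnectedComponent) :
    (G.deleteEdges {f}).IsBridge s(a, b) := by
  rwa [← hf, ← deleteEdges_singleton_deleteEdges_singleton, Ne,
    card_connectedComponent_deleteEdges_eq_iff (deleteEdges_adj.mpr ⟨hab, hne⟩), not_not] at hef

end SimpleGraph

def cross (u v : ℝ × ℝ) : ℝ := u.1 * v.2 - u.2 * v.1

theorem collinear_of_cross_sub_eq_zero {P Q R : ℝ × ℝ} (h : cross (Q - P) (R - P) = 0) :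
    Collinear ℝ {P, Q, R} := by
  rcases eq_or_ne Q P with rfl | hQP
  · simpa using collinear_pair ℝ Q R
  have hnorm : (Q - P).1 ^ 2 + (Q - P).2 ^ 2 ≠ 0 := by
    intro h0
    apply sub_ne_zero.mpr hQP
    ext <;> simp only [Prod.fst_zero, Prod.snd_zero] <;>
      nlinarith [sq_nonneg (Q - P).1, sq_nonneg (Q - P).2]
  rw [collinear_iff_of_mem (Set.mem_insert P _)]
  refine ⟨Q - P, ?_⟩
  simp only [Set.mem_insert_iff, Set.mem_singleton_iff, vadd_eq_add]
  rintro X (rfl | rfl | rfl)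
  · exact ⟨0, by simp⟩
  · exact ⟨1, by simp⟩
  · -- the orthogonal projection of `X - P` to `Q - P` is all of it
    refine ⟨((X - P).1 * (Q - P).1 + (X - P).2 * (Q - P).2) / ((Q - P).1 ^ 2 + (Q - P).2 ^ 2), ?_⟩
    unfold cross at h
    ext <;> simp only [Prod.smul_fst, Prod.smul_snd, Prod.fst_add, Prod.snd_add, smul_eq_mul] <;>
      field_simp <;> simp only [Prod.fst_sub, Prod.snd_sub] at h ⊢
    · linear_combination -(Q.2 - P.2) * h
    · linear_combination (Q.1 - P.1) * h

theorem GeneralPosition.cross_sub_ne_zero {V : Type*} {p : V → ℝ × ℝ} (hp : GeneralPosition p)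
    {i j k : V} (hij : i ≠ j) (hjk : j ≠ k) (hik : i ≠ k) :
    cross (p j - p i) (p k - p i) ≠ 0 :=
  fun h => hp.2 i j k hij hjk hik (collinear_of_cross_sub_eq_zero h)

/-- Plücker coordinates (direction, moment) of the line through `P` and `Q`. -/
def lineCoords (P Q : ℝ × ℝ) : (ℝ × ℝ) × ℝ := (P - Q, cross Q P)

theorem linearIndependent_lineCoords {P Q R S : ℝ × ℝ} (hRS : R ≠ S)
    (h : cross (Q - P) (R - P) ≠ 0 ∨ cross (Q - P) (S - P) ≠ 0) :
    LinearIndependent ℝ ![lineCoords P Q, lineCoords R S] := by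
  rw [LinearIndependent.pair_iff]
  intro s t hst
  simp only [lineCoords, Prod.smul_mk, Prod.mk_add_mk, Prod.mk_eq_zero, smul_eq_mul] at hst
  obtain ⟨hdir, hmom⟩ := hst
  have E1 := congrArg Prod.fst hdir
  have E2 := congrArg Prod.snd hdir
  simp only [Prod.fst_add, Prod.snd_add, Prod.smul_fst, Prod.smul_snd, Prod.fst_sub, Prod.snd_sub,
    smul_eq_mul, Prod.fst_zero, Prod.snd_zero] at E1 E2
  unfold cross at h hmom
  simp only [Prod.fst_sub, Prod.snd_sub] at h
  have hs : s = 0 := by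
    by_contra hs
    refine h.elim (fun hR => hR ?_) (fun hS => hS ?_) <;> apply (mul_eq_zero.mp ?_).resolve_left hs
    · linear_combination -R.2 * E1 + R.1 * E2 - hmom
    · linear_combination -S.2 * E1 + S.1 * E2 - hmom
  subst hs
  simpa [sub_eq_zero, hRS] using hdir

open Module Submodule in
theorem finrank_span_union_eq_card_add {K M N : Type*} [DivisionRing K] [AddCommGroup M]
    [Module K M] [AddCommGroup N] [Module K N] [FiniteDimensional K M] {ι : Type*} [Fintype ι]
    {s : Set M} (φ : M →ₗ[K] N) (hs : s ⊆ LinearMap.ker φ) {v : ι → M}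
    (hv : LinearIndependent K (φ ∘ v)) :
    finrank K (span K (Set.range v ∪ s)) = Fintype.card ι + finrank K (span K s) := by
  have hdisj : span K (Set.range v) ⊓ span K s = ⊥ :=
    (Submodule.range_ker_disjoint hv).mono_right (span_le.mpr hs) |>.eq_bot
  have hsum := finrank_sup_add_finrank_inf_eq (span K (Set.range v)) (span K s)
  rw [hdisj, finrank_bot, add_zero, finrank_span_eq_card hv.of_comp] at hsum
  rw [span_union, hsum]

section EdgeVectors

variable {V : Type*}

theorem edgeVec_eq_single_sub_single [DecidableEq V] (p : V → ℝ × ℝ) (i j : V) :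
    edgeVec p i j = Pi.single i (p i - p j) - Pi.single j (p i - p j) := by
  funext v
  by_cases hvi : v = i <;> by_cases hvj : v = j <;> subst_vars <;> simp [edgeVec, *]

theorem edgeVec_comm (p : V → ℝ × ℝ) (i j : V) : edgeVec p i j = edgeVec p j i := by
  classical
  rw [edgeVec_eq_single_sub_single, edgeVec_eq_single_sub_single, ← neg_sub (p i), Pi.single_neg,
    Pi.single_neg, neg_sub_neg]

theorem edgeVecs_union (p : V → ℝ × ℝ) (F F' : Set (Sym2 V)) :
    edgeVecs p (F ∪ F') = edgeVecs p F ∪ edgeVecs p F' := by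
  ext
  simp only [edgeVecs, Set.mem_union, Set.mem_ofPred_eq, ← exists_or, ← or_and_right]

theorem edgeVecs_singleton (p : V → ℝ × ℝ) (a b : V) : edgeVecs p {s(a, b)} = {edgeVec p a b} := by
  ext
  simp only [edgeVecs, Set.mem_singleton_iff, Set.mem_ofPred_eq]
  constructor
  · rintro ⟨i, j, hij, rfl⟩
    rcases Sym2.eq_iff.mp hij with ⟨rfl, rfl⟩ | ⟨rfl, rfl⟩
    exacts [rfl, edgeVec_comm p i j]
  · rintro rfl
    exact ⟨a, b, rfl, rfl⟩

theorem edgeVecs_pair (p : V → ℝ × ℝ) (a b c d : V) :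
    edgeVecs p {s(a, b), s(c, d)} = {edgeVec p a b, edgeVec p c d} := by
  rw [Set.insert_eq, Set.insert_eq, edgeVecs_union, edgeVecs_singleton, edgeVecs_singleton]

def momentOn (p : V → ℝ × ℝ) (U : Finset V) : (V → ℝ × ℝ) →ₗ[ℝ] (ℝ × ℝ) × ℝ where
  toFun g := ∑ v ∈ U, (g v, cross (p v) (g v))
  map_add' g h := by
    rw [← Finset.sum_add_distrib]
    refine Finset.sum_congr rfl fun v _ => ?_
    simp only [cross, Pi.add_apply, Prod.fst_add, Prod.snd_add, Prod.mk_add_mk]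
    congr 1
    ring
  map_smul' c g := by
    rw [Finset.smul_sum]
    refine Finset.sum_congr rfl fun v _ => ?_
    simp only [cross, Pi.smul_apply, Prod.smul_fst, Prod.smul_snd, smul_eq_mul, Prod.smul_mk,
      RingHom.id_apply]
    congr 1
    ring

theorem momentOn_single [DecidableEq V] (p : V → ℝ × ℝ) (U : Finset V) (v : V) (w : ℝ × ℝ) :
    momentOn p U (Pi.single v w) = if v ∈ U then (w, cross (p v) w) else 0 := by
  change ∑ u ∈ U, _ = _
  split_ifs with hv
  · rw [Finset.sum_eq_single_of_mem v hv fun u _ hu => by simp [hu, cross]]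
    simp
  · exact Finset.sum_eq_zero fun u hu => by simp [ne_of_mem_of_not_mem hu hv, cross]

theorem momentOn_edgeVec_of_mem_iff (p : V → ℝ × ℝ) {U : Finset V} {i j : V}
    (h : i ∈ U ↔ j ∈ U) : momentOn p U (edgeVec p i j) = 0 := by
  classical
  rw [edgeVec_eq_single_sub_single, map_sub, momentOn_single, momentOn_single]
  by_cases hi : i ∈ U
  · simp only [hi, h.mp hi, if_true, Prod.mk_sub_mk, sub_self, Prod.mk_eq_zero, true_and]
    simp only [cross, Prod.fst_sub, Prod.snd_sub]
    ring
  · simp [hi, mt h.mpr hi]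

theorem momentOn_edgeVec_of_mem_of_notMem (p : V → ℝ × ℝ) {U : Finset V} {i j : V}
    (hi : i ∈ U) (hj : j ∉ U) : momentOn p U (edgeVec p i j) = lineCoords (p i) (p j) := by
  classical
  rw [edgeVec_eq_single_sub_single, map_sub, momentOn_single, momentOn_single, if_pos hi,
    if_neg hj, sub_zero, lineCoords]
  simp only [cross, Prod.fst_sub, Prod.snd_sub]
  congr 1
  ring

theorem edgeVecs_subset_ker_momentOn (p : V → ℝ × ℝ) {U : Finset V} {F : Set (Sym2 V)}
    (hF : ∀ i j, s(i, j) ∈ F → (i ∈ U ↔ j ∈ U)) :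
    edgeVecs p F ⊆ LinearMap.ker (momentOn p U) := by
  rintro _ ⟨i, j, hij, rfl⟩
  exact momentOn_edgeVec_of_mem_iff p (hF i j hij)

theorem rankOf_pair_union_of_cut [Finite V] {p : V → ℝ × ℝ} (hp : GeneralPosition p)
    {F : Set (Sym2 V)} {U : Finset V} (hF : ∀ i j, s(i, j) ∈ F → (i ∈ U ↔ j ∈ U))
    {a b c d : V} (ha : a ∈ U) (hb : b ∉ U) (hc : c ∈ U) (hd : d ∉ U) (hne : s(a, b) ≠ s(c, d)) :
    rankOf p ({s(a, b), s(c, d)} ∪ F) = rankOf p F + 2 := by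
  have hab : a ≠ b := ne_of_mem_of_not_mem ha hb
  have hcd : c ≠ d := ne_of_mem_of_not_mem hc hd
  have hind : LinearIndependent ℝ (momentOn p U ∘ ![edgeVec p a b, edgeVec p c d]) := by
    rw [← FinVec.map_eq]
    change LinearIndependent ℝ ![momentOn p U (edgeVec p a b), momentOn p U (edgeVec p c d)]
    rw [momentOn_edgeVec_of_mem_of_notMem p ha hb, momentOn_edgeVec_of_mem_of_notMem p hc hd]
    refine linearIndependent_lineCoords (hp.1.ne hcd) ?_
    by_cases hca : c = a
    · subst hca
      have hbd : b ≠ d := fun h => hne (h ▸ rfl)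
      exact .inr (hp.cross_sub_ne_zero hab hbd hcd)
    · exact .inl (hp.cross_sub_ne_zero hab (ne_of_mem_of_not_mem hc hb).symm (Ne.symm hca))
  rw [rankOf, edgeVecs_union, edgeVecs_pair, ← Matrix.range_cons_cons_empty _ _ ![],
    finrank_span_union_eq_card_add (momentOn p U) (edgeVecs_subset_ker_momentOn p hF) hind,
    Fintype.card_fin, add_comm, rankOf]

theorem stressNum_diff_pair_of_cut [Finite V] {p : V → ℝ × ℝ} (hp : GeneralPosition p)
    {E : Set (Sym2 V)} {U : Finset V} {a b c d : V} (he : s(a, b) ∈ E) (hf : s(c, d) ∈ E)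
    (hne : s(a, b) ≠ s(c, d)) (hE : ∀ i j, s(i, j) ∈ E \ {s(a, b), s(c, d)} → (i ∈ U ↔ j ∈ U))
    (ha : a ∈ U) (hb : b ∉ U) (hc : c ∈ U) (hd : d ∉ U) :
    stressNum p (E \ {s(a, b), s(c, d)}) = stressNum p E := by
  have hsub : {s(a, b), s(c, d)} ⊆ E := Set.insert_subset he (Set.singleton_subset_iff.mpr hf)
  have hrank := rankOf_pair_union_of_cut hp hE ha hb hc hd hne
  rw [Set.union_sdiff_cancel hsub] at hrank
  have hcard := Set.ncard_sdiff hsub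
  have hle := Set.ncard_le_ncard hsub
  rw [Set.ncard_pair hne] at hcard hle
  unfold stressNum
  omega

end EdgeVectors

open SimpleGraph in
/-- If deleting any single edge of `G` does not increase the number of connected components,
but deleting the two distinct edges `e` and `f` increases the number of connected components
by 1, then deleting these two edges does not affect the number of stress. -/
theorem stressNum_delete_two_edges {V : Type*} [Fintype V] (G : SimpleGraph V)
    (p : V → ℝ × ℝ) (hp : GeneralPosition p)
    (hone : ∀ g ∈ G.edgeSet, Nat.card (G.deleteEdges {g}).ConnectedComponent
      = Nat.card G.ConnectedComponent)
    (e f : Sym2 V) (he : e ∈ G.edgeSet) (hf : f ∈ G.edgeSet) (hef : e ≠ f)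
    (htwo : Nat.card (G.deleteEdges {e, f}).ConnectedComponent
      = Nat.card G.ConnectedComponent + 1) :
    stressNum p (G.edgeSet \ {e, f}) = stressNum p G.edgeSet := by
  classical
  induction e using Sym2.ind with | h a b => ?_
  induction f using Sym2.ind with | h c d => ?_
  have hab := isBridge_deleteEdges_of_card (G.mem_edgeSet.mp he) hef (hone _ hf) (by omega)
  have hcd := isBridge_deleteEdges_of_card (G.mem_edgeSet.mp hf) hef.symm (hone _ he)
    (by rw [Set.pair_comm]; omega)
  rw [isBridge_iff, deleteEdges_singleton_deleteEdges_singleton, Set.pair_comm] at hcd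
  have hreach : (G.deleteEdges {s(c, d)}).Reachable c d := by
    simpa [isBridge_iff] using (card_connectedComponent_deleteEdges_eq_iff hf).mp (hone _ hf)
  have hxor := hreach.xor_reachable_deleteEdges hab
  rw [isBridge_iff] at hab
  rw [deleteEdges_singleton_deleteEdges_singleton] at hxor hab
  set H := G.deleteEdges {s(a, b), s(c, d)}
  let U := Finset.univ.filter (H.Reachable a)
  have hU : ∀ i j, s(i, j) ∈ G.edgeSet \ {s(a, b), s(c, d)} → (i ∈ U ↔ j ∈ U) := by
    intro i j hij
    rw [← edgeSet_deleteEdges, mem_edgeSet] at hij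
    simpa [U] using ⟨fun h => h.trans hij.reachable, fun h => h.trans hij.symm.reachable⟩
  have haU : a ∈ U := by simp [U]
  rcases hxor hcd with ⟨hac, had⟩ | ⟨had, hac⟩
  on_goal 2 => rw [Sym2.eq_swap (a := c)] at hf hef hU ⊢
  all_goals
    exact stressNum_diff_pair_of_cut hp he hf hef hU haU (by simpa [U] using hab)
      (by simpa [U]) (by simpa [U])
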